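/- Let G ⊊ ℝⁿ be a domain (so that, viewed as a subset of ℝ̄ⁿ, its boundary has at least two points). Then for all x, y ∈ G, j_G(x,y) ≤ ρ_G(x,y). -/

import Mathlib

open OnePoint

noncomputable section

/-- Inverse hyperbolic cosine: arcosh t = log (t + √(t² − 1)). -/
def arcosh (t : ℝ) : ℝ := Real.log (t + Real.sqrt (t ^ 2 - 1))

/-- Euclidean n-space. -/
abbrev En (n : ℕ) : Type := EuclideanSpace ℝ (Fin n)

/-- The chordal (spherical) metric on the one-point compactification ℝ̄ⁿ of ℝⁿ. -/
def chordal {n : ℕ} : OnePoint (En n) → OnePoint (En n) → ℝ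
  | ∞, ∞ => 0
  | ∞, (y : En n) => 1 / Real.sqrt (1 + ‖y‖ ^ 2)
  | (x : En n), ∞ => 1 / Real.sqrt (1 + ‖x‖ ^ 2)
  | (x : En n), (y : En n) => ‖x - y‖ / (Real.sqrt (1 + ‖x‖ ^ 2) * Real.sqrt (1 + ‖y‖ ^ 2))

/-- The cross-ratio |a,b,c,d| = q(a,c)q(b,d)/(q(a,b)q(c,d)) in the chordal metric. -/
def crossRatio {n : ℕ} (a b c d : OnePoint (En n)) : ℝ :=
  chordal a c * chordal b d / (chordal a b * chordal c d)

/-- The generalized hyperbolic metric ρ_G(x,y) = sup_{a,b ∈ ∂G} arcosh(1 + |a,x,b,y||a,y,b,x|/2). -/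
def rho {n : ℕ} (G : Set (OnePoint (En n))) (x y : OnePoint (En n)) : ℝ :=
  sSup {r : ℝ | ∃ a ∈ frontier G, ∃ b ∈ frontier G,
    r = arcosh (1 + crossRatio a x b y * crossRatio a y b x / 2)}

/-- Seittenranta's metric δ_G(x,y) = sup_{a,b ∈ ∂G} log(1 + |a,x,b,y|). -/
def seittenranta {n : ℕ} (G : Set (OnePoint (En n))) (x y : OnePoint (En n)) : ℝ :=
  sSup {r : ℝ | ∃ a ∈ frontier G, ∃ b ∈ frontier G,
    r = Real.log (1 + crossRatio a x b y)}

/-- The j-metric j_G(x,y) = log(1 + |x−y|/min(d(x,∂G), d(y,∂G))). -/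
def jMetric {n : ℕ} (G : Set (En n)) (x y : En n) : ℝ :=
  Real.log (1 + ‖x - y‖ / min (Metric.infDist x (frontier G)) (Metric.infDist y (frontier G)))

/-- The metric δ_G^p(x,y) = sup_{a,b ∈ ∂G} log(1 + (|x,a,y,b|^p + |x,b,y,a|^p)^(1/p)). -/
def deltaP {n : ℕ} (p : ℝ) (G : Set (OnePoint (En n))) (x y : OnePoint (En n)) : ℝ :=
  sSup {r : ℝ | ∃ a ∈ frontier G, ∃ b ∈ frontier G,
    r = Real.log (1 + (crossRatio x a y b ^ p + crossRatio x b y a ^ p) ^ (1 / p))}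

/-- The metric j_G^p(x,y) = sup_{a ∈ ∂G} log(1 + (|x−y|^p/|x−a|^p + |x−y|^p/|y−a|^p)^(1/p)). -/
def jP {n : ℕ} (p : ℝ) (G : Set (En n)) (x y : En n) : ℝ :=
  sSup {r : ℝ | ∃ a ∈ frontier G,
    r = Real.log (1 + (‖x - y‖ ^ p / ‖x - a‖ ^ p + ‖x - y‖ ^ p / ‖y - a‖ ^ p) ^ (1 / p))}

/-!
Assume `d(x, ∂G) ≤ d(y, ∂G)` (both sides are symmetric in `x, y`) and let `a ∈ ∂G` be a nearest
boundary point of `x`; put `d = |x - a|`, `l = |x - y|`. Since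
`cosh (log (1 + l / d)) = 1 + l² / (2 d (d + l))`, it suffices to find `b ∈ ∂G` (in `ℝ̄ⁿ`) with
`|a,x,b,y| |a,y,b,x| ≥ l² / (d (d + l))`. If `G` is unbounded, `b = ∞` works; otherwise take for
`b` a boundary point on the ray from `a` through `y`, beyond `y`. In both cases the inequality
comes down to `|a - y| ≤ d + l`. As `ρ` is a supremum, one also needs the cross-ratios to be
bounded, which holds because the chordal distance from `x` to `∂G` is positive.
-/

open Set Bornology Metric

theorem arcosh_eq_real_arcosh : arcosh = Real.arcosh := rfl

theorem log_one_add_div_le_arcosh {d l t : ℝ} (hd : 0 < d) (hl : 0 ≤ l) (ht : 0 ≤ t)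
    (h : l ^ 2 ≤ t * (d * (d + l))) : Real.log (1 + l / d) ≤ arcosh (1 + t / 2) := by
  have hpos : 0 < 1 + l / d := by positivity
  have hcosh : Real.cosh (Real.log (1 + l / d)) = 1 + l ^ 2 / (d * (d + l)) / 2 := by
    rw [Real.cosh_log hpos]
    field_simp
    ring
  calc Real.log (1 + l / d)
      = Real.arcosh (Real.cosh (Real.log (1 + l / d))) :=
        (Real.arcosh_cosh (Real.log_nonneg (by linarith [div_nonneg hl hd.le]))).symm
    _ ≤ arcosh (1 + t / 2) := by
        rw [hcosh, arcosh_eq_real_arcosh, Real.arcosh_le_arcosh (by positivity) (by positivity)]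
        gcongr
        exact div_le_of_le_mul₀ (by positivity) ht h

theorem IsPreconnected.inter_frontier_nonempty {X : Type*} [TopologicalSpace X] {s t : Set X}
    (hs : IsPreconnected s) (hst : (s ∩ t).Nonempty) (hst' : (s \ t).Nonempty) :
    (s ∩ frontier t).Nonempty := by
  by_contra h
  have hcover : s ⊆ interior t ∪ (closure t)ᶜ := fun p hp => by
    by_cases hpt : p ∈ closure t
    · exact Or.inl (by_contra fun hpi => h ⟨p, hp, hpt, hpi⟩)
    · exact Or.inr hpt
  obtain ⟨p, hps, hpt⟩ := hst
  have hsub : s ⊆ interior t :=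
    hs.subset_left_of_subset_union isOpen_interior isClosed_closure.isOpen_compl
      (disjoint_compl_right_iff_subset.2 (interior_subset.trans subset_closure)) hcover
      ⟨p, hps, (hcover hps).resolve_right (not_not.2 (subset_closure hpt))⟩
  obtain ⟨q, hqs, hqt⟩ := hst'
  exact hqt (interior_subset (hsub hqs))

theorem exists_add_smul_mem_frontier {E : Type*} [NormedAddCommGroup E] [NormedSpace ℝ E]
    {G : Set E} (hG : IsBounded G) {y v : E} (hy : y ∈ G) (hv : v ≠ 0) :
    ∃ T : ℝ, 0 ≤ T ∧ y + T • v ∈ frontier G := by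
  obtain ⟨R, hR⟩ := (isBounded_iff_subset_closedBall y).1 hG
  set s := (|R| + 1) / ‖v‖
  have hs : 0 ≤ s := by positivity
  have hout : y + s • v ∉ G := fun h => by
    have := hR h
    rw [mem_closedBall, dist_eq_norm, add_sub_cancel_left, norm_smul, Real.norm_of_nonneg hs,
      div_mul_cancel₀ _ (norm_ne_zero_iff.2 hv)] at this
    linarith [le_abs_self R]
  obtain ⟨_, ⟨T, hT, rfl⟩, hTF⟩ :=
    ((isPreconnected_Icc (a := 0) (b := s)).image (fun t : ℝ => y + t • v)
      (by fun_prop)).inter_frontier_nonempty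
      ⟨y, ⟨0, ⟨le_rfl, hs⟩, by simp⟩, hy⟩ ⟨_, ⟨s, ⟨hs, le_rfl⟩, rfl⟩, hout⟩
  exact ⟨T, hT.1, hTF⟩

theorem norm_sub_mul_norm_sub_mul_norm_sub_le_of_eq_add_smul {E : Type*}
    [NormedAddCommGroup E] [NormedSpace ℝ E] {a b x y : E} {T : ℝ} (hT : 0 ≤ T)
    (hb : b = y + T • (y - a)) :
    ‖a - y‖ * (‖b - x‖ * ‖b - y‖) ≤ ‖a - b‖ ^ 2 * (‖a - x‖ + ‖x - y‖) := by
  have hby : ‖b - y‖ = T * ‖a - y‖ := by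
    rw [hb, add_sub_cancel_left, norm_smul, Real.norm_of_nonneg hT, norm_sub_rev]
  have hab : ‖a - b‖ = (1 + T) * ‖a - y‖ := by
    rw [hb, show a - (y + T • (y - a)) = (1 + T) • (a - y) by module, norm_smul,
      Real.norm_of_nonneg (by linarith)]
  have hbx : ‖b - x‖ ≤ T * ‖a - y‖ + ‖x - y‖ := by
    rw [← hby, norm_sub_rev x y]
    exact norm_sub_le_norm_sub_add_norm_sub b y x
  have hay : ‖a - y‖ ≤ ‖a - x‖ + ‖x - y‖ := norm_sub_le_norm_sub_add_norm_sub a x y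
  have hdl : 0 ≤ ‖a - x‖ + ‖x - y‖ := by positivity
  rw [hby, hab]
  calc ‖a - y‖ * (‖b - x‖ * (T * ‖a - y‖))
      ≤ ‖a - y‖ * ((T * ‖a - y‖ + ‖x - y‖) * (T * ‖a - y‖)) := by gcongr
    _ = T * ‖a - y‖ ^ 2 * (T * ‖a - y‖ + ‖x - y‖) := by ring
    _ ≤ T * ‖a - y‖ ^ 2 * ((2 + T) * (‖a - x‖ + ‖x - y‖)) := by
        gcongr
        nlinarith [mul_le_mul_of_nonneg_left hay hT, norm_nonneg (a - x)]
    _ ≤ ((1 + T) * ‖a - y‖) ^ 2 * (‖a - x‖ + ‖x - y‖) := by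
        nlinarith [mul_nonneg (sq_nonneg ‖a - y‖) hdl]

theorem OnePoint.coe_mem_frontier_image_coe_iff {X : Type*} [TopologicalSpace X] {s : Set X}
    {x : X} : (x : OnePoint X) ∈ frontier ((↑) '' s) ↔ x ∈ frontier s := by
  rw [← mem_preimage, isOpenMap_coe.preimage_frontier_eq_frontier_preimage continuous_coe,
    preimage_image_eq _ coe_injective]

theorem OnePoint.infty_mem_frontier_image_coe {X : Type*} [PseudoMetricSpace X] {s : Set X}
    (hs : ¬IsBounded s) : (∞ : OnePoint X) ∈ frontier ((↑) '' s) := by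
  refine ⟨mem_closure_iff.2 fun o ho hmem => ?_, fun h => ?_⟩
  · have hK := ((isOpen_iff_of_mem' hmem).1 ho).1.isBounded
    obtain ⟨z, hzs, hzo⟩ := not_subset.1 fun hsub => hs (hK.subset hsub)
    exact ⟨z, not_not.1 hzo, mem_image_of_mem _ hzs⟩
  · obtain ⟨z, -, hz⟩ := interior_subset h
    exact coe_ne_infty z hz

section Chordal

variable {n : ℕ}

theorem chordal_nonneg (p q : OnePoint (En n)) : 0 ≤ chordal p q := by
  cases p <;> cases q <;> simp only [chordal] <;> positivity

theorem chordal_le_one (p q : OnePoint (En n)) : chordal p q ≤ 1 := by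
  have one_le (r : ℝ) : 1 ≤ √(1 + r ^ 2) := Real.one_le_sqrt.2 (by nlinarith [sq_nonneg r])
  cases p with
  | infty => cases q with
    | infty => simp [chordal]
    | coe y => exact div_le_one_of_le₀ (one_le _) (by positivity)
  | coe x => cases q with
    | infty => exact div_le_one_of_le₀ (one_le _) (by positivity)
    | coe y =>
      refine div_le_one_of_le₀ ((norm_sub_le x y).trans ?_) (by positivity)
      rw [← Real.sqrt_mul (by positivity)]
      apply Real.le_sqrt_of_sq_le
      nlinarith [sq_nonneg (‖x‖ * ‖y‖ - 1)]

theorem crossRatio_nonneg (a b c d : OnePoint (En n)) : 0 ≤ crossRatio a b c d :=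
  div_nonneg (mul_nonneg (chordal_nonneg _ _) (chordal_nonneg _ _))
    (mul_nonneg (chordal_nonneg _ _) (chordal_nonneg _ _))

theorem crossRatio_le_of_le_chordal {a b c d : OnePoint (En n)} {ε δ : ℝ} (hε : 0 < ε)
    (hδ : 0 < δ) (hab : ε ≤ chordal a b) (hcd : δ ≤ chordal c d) :
    crossRatio a b c d ≤ (ε * δ)⁻¹ := by
  rw [crossRatio, inv_eq_one_div]
  exact div_le_div₀ zero_le_one
    (mul_le_one₀ (chordal_le_one _ _) (chordal_nonneg _ _) (chordal_le_one _ _))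
    (by positivity) (mul_le_mul hab hcd hδ.le (chordal_nonneg _ _))

theorem crossRatio_mul_crossRatio_coe {a b x y : En n} (hax : a ≠ x) (hay : a ≠ y)
    (hbx : b ≠ x) (hby : b ≠ y) :
    crossRatio (a : OnePoint (En n)) x b y * crossRatio (a : OnePoint (En n)) y b x =
      (‖a - b‖ * ‖x - y‖) ^ 2 / (‖a - x‖ * ‖a - y‖ * (‖b - x‖ * ‖b - y‖)) := by
  have := norm_ne_zero_iff.2 (sub_ne_zero.2 hax)
  have := norm_ne_zero_iff.2 (sub_ne_zero.2 hay)
  have := norm_ne_zero_iff.2 (sub_ne_zero.2 hbx)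
  have := norm_ne_zero_iff.2 (sub_ne_zero.2 hby)
  simp only [crossRatio, chordal]
  rw [norm_sub_rev y x]
  field_simp

theorem crossRatio_mul_crossRatio_infty {a x y : En n} (hax : a ≠ x) (hay : a ≠ y) :
    crossRatio (a : OnePoint (En n)) x ∞ y * crossRatio (a : OnePoint (En n)) y ∞ x =
      ‖x - y‖ ^ 2 / (‖a - x‖ * ‖a - y‖) := by
  have := norm_ne_zero_iff.2 (sub_ne_zero.2 hax)
  have := norm_ne_zero_iff.2 (sub_ne_zero.2 hay)
  simp only [crossRatio, chordal]
  rw [norm_sub_rev y x]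
  field_simp

theorem exists_pos_le_chordal_of_mem_frontier {G : Set (En n)} (hG : IsOpen G) {x : En n}
    (hx : x ∈ G) :
    ∃ ε > 0, ∀ p ∈ frontier ((↑) '' G : Set (OnePoint (En n))), ε ≤ chordal p x := by
  obtain ⟨c, hc, hball⟩ := Metric.isOpen_iff.1 hG x hx
  have hS : 0 < √(1 + ‖x‖ ^ 2) := by positivity
  refine ⟨c / ((1 + ‖x‖ + c) * √(1 + ‖x‖ ^ 2)), by positivity, ?_⟩
  rintro (_ | z) hz
  · show _ ≤ 1 / √(1 + ‖x‖ ^ 2)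
    rw [div_le_div_iff₀ (by positivity) hS]
    nlinarith [norm_nonneg x]
  · have hzG : z ∉ G := fun h =>
      (hG.frontier_eq ▸ coe_mem_frontier_image_coe_iff.1 hz).2 h
    have hcz : c ≤ ‖z - x‖ := by
      simpa [dist_eq_norm] using fun h => hzG (hball (mem_ball.2 h))
    have hZ : √(1 + ‖z‖ ^ 2) ≤ 1 + ‖x‖ + ‖z - x‖ := by
      rw [Real.sqrt_le_left (by positivity)]
      nlinarith [norm_le_norm_add_norm_sub' z x, norm_nonneg z]
    show _ ≤ ‖z - x‖ / (√(1 + ‖z‖ ^ 2) * √(1 + ‖x‖ ^ 2))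
    rw [div_le_div_iff₀ (by positivity) (by positivity)]
    have : c * √(1 + ‖z‖ ^ 2) ≤ ‖z - x‖ * (1 + ‖x‖ + c) := by
      nlinarith [mul_le_mul_of_nonneg_left hZ hc.le, norm_nonneg x]
    nlinarith [mul_le_mul_of_nonneg_right this hS.le]

end Chordal

section Metrics

variable {n : ℕ}

theorem jMetric_comm (G : Set (En n)) (x y : En n) : jMetric G x y = jMetric G y x := by
  rw [jMetric, jMetric, norm_sub_rev, min_comm]

theorem rho_comm (G : Set (OnePoint (En n))) (x y : OnePoint (En n)) :
    rho G x y = rho G y x := by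
  simp only [rho, mul_comm (crossRatio _ x _ y)]

theorem bddAbove_rho_set {G : Set (En n)} (hG : IsOpen G) {x y : En n} (hx : x ∈ G)
    (hy : y ∈ G) :
    BddAbove {r : ℝ | ∃ a ∈ frontier ((↑) '' G : Set (OnePoint (En n))),
      ∃ b ∈ frontier ((↑) '' G : Set (OnePoint (En n))),
      r = arcosh (1 + crossRatio a x b y * crossRatio a y b x / 2)} := by
  obtain ⟨ε, hε, hεx⟩ := exists_pos_le_chordal_of_mem_frontier hG hx
  obtain ⟨δ, hδ, hδy⟩ := exists_pos_le_chordal_of_mem_frontier hG hy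
  refine ⟨arcosh (1 + (ε * δ)⁻¹ * (ε * δ)⁻¹ / 2), ?_⟩
  rintro r ⟨a, ha, b, hb, rfl⟩
  have hxy := crossRatio_le_of_le_chordal hε hδ (hεx a ha) (hδy b hb)
  have hyx := crossRatio_le_of_le_chordal hδ hε (hδy a ha) (hεx b hb)
  rw [mul_comm δ] at hyx
  have hxy₀ := crossRatio_nonneg a x b y
  have hyx₀ := crossRatio_nonneg a y b x
  rw [arcosh_eq_real_arcosh, Real.arcosh_le_arcosh (by positivity) (by positivity)]
  gcongr

theorem le_rho {G : Set (En n)} (hG : IsOpen G) {x y : En n} (hx : x ∈ G) (hy : y ∈ G)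
    {a b : OnePoint (En n)} (ha : a ∈ frontier ((↑) '' G)) (hb : b ∈ frontier ((↑) '' G)) :
    arcosh (1 + crossRatio a x b y * crossRatio a y b x / 2) ≤
      rho ((↑) '' G : Set (OnePoint (En n))) x y :=
  le_csSup (bddAbove_rho_set hG hx hy) ⟨a, ha, b, hb, rfl⟩

theorem jMetric_le_rho_of_infDist_le {G : Set (En n)} (hG : IsOpen G) (hne : G ≠ univ)
    {x y : En n} (hx : x ∈ G) (hy : y ∈ G)
    (hxy : infDist x (frontier G) ≤ infDist y (frontier G)) :
    jMetric G x y ≤ rho ((↑) '' G : Set (OnePoint (En n))) x y := by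
  have hF : (frontier G).Nonempty := nonempty_frontier_iff.2 ⟨⟨x, hx⟩, hne⟩
  have hGF : ∀ {z}, z ∈ frontier G → z ∉ G := fun hz => (hG.frontier_eq ▸ hz).2
  obtain ⟨a, haF, hda⟩ := isClosed_frontier.exists_infDist_eq_dist hF x
  have hax : a ≠ x := fun h => hGF haF (h ▸ hx)
  have hay : a ≠ y := fun h => hGF haF (h ▸ hy)
  have hd : 0 < ‖a - x‖ := norm_pos_iff.2 (sub_ne_zero.2 hax)
  have hj : jMetric G x y = Real.log (1 + ‖x - y‖ / ‖a - x‖) := by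
    rw [jMetric, min_eq_left hxy, hda, dist_comm, dist_eq_norm]
  suffices ∃ b ∈ frontier ((↑) '' G : Set (OnePoint (En n))), ‖x - y‖ ^ 2 ≤
      crossRatio a x b y * crossRatio a y b x * (‖a - x‖ * (‖a - x‖ + ‖x - y‖)) by
    obtain ⟨b, hb, hxyb⟩ := this
    rw [hj]
    exact (log_one_add_div_le_arcosh hd (norm_nonneg _)
      (mul_nonneg (crossRatio_nonneg _ _ _ _) (crossRatio_nonneg _ _ _ _)) hxyb).trans
      (le_rho hG hx hy (coe_mem_frontier_image_coe_iff.2 haF) hb)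
  have hu : 0 < ‖a - y‖ := norm_pos_iff.2 (sub_ne_zero.2 hay)
  by_cases hB : IsBounded G
  · obtain ⟨T, hT, hbF⟩ := exists_add_smul_mem_frontier hB hy (sub_ne_zero.2 hay.symm)
    set b := y + T • (y - a)
    have hbx : b ≠ x := fun h => hGF hbF (h ▸ hx)
    have hby : b ≠ y := fun h => hGF hbF (h ▸ hy)
    have hw : 0 < ‖b - x‖ * ‖b - y‖ := by
      have := norm_pos_iff.2 (sub_ne_zero.2 hbx)
      have := norm_pos_iff.2 (sub_ne_zero.2 hby)
      positivity
    refine ⟨b, coe_mem_frontier_image_coe_iff.2 hbF, ?_⟩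
    rw [crossRatio_mul_crossRatio_coe hax hay hbx hby, div_mul_eq_mul_div,
      le_div_iff₀ (by positivity)]
    have hray : ‖a - y‖ * (‖b - x‖ * ‖b - y‖) ≤ ‖a - b‖ ^ 2 * (‖a - x‖ + ‖x - y‖) :=
      norm_sub_mul_norm_sub_mul_norm_sub_le_of_eq_add_smul hT rfl
    nlinarith [mul_le_mul_of_nonneg_left hray (by positivity : 0 ≤ ‖x - y‖ ^ 2 * ‖a - x‖)]
  · refine ⟨∞, infty_mem_frontier_image_coe hB, ?_⟩
    rw [crossRatio_mul_crossRatio_infty hax hay, div_mul_eq_mul_div,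
      le_div_iff₀ (by positivity)]
    have hay_le : ‖a - y‖ ≤ ‖a - x‖ + ‖x - y‖ := norm_sub_le_norm_sub_add_norm_sub a x y
    nlinarith [mul_le_mul_of_nonneg_left hay_le (by positivity : 0 ≤ ‖x - y‖ ^ 2 * ‖a - x‖)]

end Metrics

theorem jMetric_le_rho_general (n : ℕ) (G : Set (En n))
    (hopen : IsOpen G) (hne : G ≠ Set.univ)
    (x y : En n) (hx : x ∈ G) (hy : y ∈ G) :
    jMetric G x y ≤
      rho (((↑) : En n → OnePoint (En n)) '' G) (x : OnePoint (En n)) (y : OnePoint (En n)) := by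
  rcases le_total (infDist x (frontier G)) (infDist y (frontier G)) with hxy | hyx
  · exact jMetric_le_rho_of_infDist_le hopen hne hx hy hxy
  · rw [jMetric_comm, rho_comm]
    exact jMetric_le_rho_of_infDist_le hopen hne hy hx hyx

/-- j_G ≤ ρ_G for a proper subdomain G of ℝⁿ, where ρ is computed for G viewed as a
subdomain of ℝ̄ⁿ = ℝⁿ ∪ {∞}. -/
theorem jMetric_le_rho (n : ℕ) (hn : 2 ≤ n) (G : Set (En n))
    (hopen : IsOpen G) (hconn : IsConnected G) (hne : G ≠ Set.univ)
    (x y : En n) (hx : x ∈ G) (hy : y ∈ G) :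
    jMetric G x y ≤
      rho (((↑) : En n → OnePoint (En n)) '' G) (x : OnePoint (En n)) (y : OnePoint (En n)) :=
  jMetric_le_rho_general n G hopen hne x y hx hy

end
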